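/- Let ℱ,𝒢 be forts of length ℓ, let φ: ℱ→𝒢 be a morphism, and let 𝒢′⊆𝒢 be a fort of length ℓ contained in 𝒢. Then ℱ′ := φ^{−1}(𝒢′) is a fort of length ℓ, and the restriction φ|_{ℱ′}: ℱ′→𝒢′ is a morphism. -/

import Mathlib

open Set

namespace Forts

/-- An integer cell of length 1: a singleton `{k}` or an open interval `(k, k+1)`, `k : ℤ`. -/
def Cell1 (S : Set ℝ) : Prop :=
  ∃ k : ℤ, S = {(k : ℝ)} ∨ S = Set.Ioo (k : ℝ) ((k : ℝ) + 1)

/-- An integer cell of length ℓ: a product of ℓ integer cells of length 1. -/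
def Cell {ℓ : ℕ} (S : Set (Fin ℓ → ℝ)) : Prop :=
  ∃ c : Fin ℓ → Set ℝ, (∀ i, Cell1 (c i)) ∧ S = {x | ∀ i, x i ∈ c i}

/-- `cellsOf S` is the collection of integer cells contained in `S`. -/
def cellsOf {ℓ : ℕ} (S : Set (Fin ℓ → ℝ)) : Set (Set (Fin ℓ → ℝ)) :=
  {C | Cell C ∧ C ⊆ S}

/-- Forts, defined inductively along the first coordinate: a fort of length 1 is an
interval `(0, n)` with `n ≥ 1`; given a fort `F1` of length 1 and an assignment `s` of a
fort of length ℓ to each integer cell of `F1`, the set `F1 ⋉ s = ⋃_{C ∈ C(F1)} C × s(C)`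
is a fort of length `ℓ + 1`. -/
inductive Fort : (ℓ : ℕ) → Set (Fin ℓ → ℝ) → Prop
  | base (n : ℕ) (hn : 0 < n) : Fort 1 {x : Fin 1 → ℝ | x 0 ∈ Set.Ioo (0 : ℝ) (n : ℝ)}
  | step {ℓ : ℕ} (F1 : Set (Fin 1 → ℝ)) (s : Set (Fin 1 → ℝ) → Set (Fin ℓ → ℝ))
      (hF1 : Fort 1 F1) (hs : ∀ C ∈ cellsOf F1, Fort ℓ (s C)) :
      Fort (ℓ + 1)
        {x : Fin (ℓ + 1) → ℝ | ∃ C ∈ cellsOf F1, (fun _ : Fin 1 => x 0) ∈ C ∧ Fin.tail x ∈ s C}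

/-- A map between subsets of ℝ^ℓ is precellular if each coordinate function depends only on
the first `i` coordinates and is strictly increasing in the `i`-th coordinate. -/
def Precellular {ℓ : ℕ} (X : Set (Fin ℓ → ℝ)) (f : (Fin ℓ → ℝ) → (Fin ℓ → ℝ)) : Prop :=
  (∀ i : Fin ℓ, ∀ x ∈ X, ∀ y ∈ X, (∀ j : Fin ℓ, j ≤ i → x j = y j) → f x i = f y i) ∧
  (∀ i : Fin ℓ, ∀ x ∈ X, ∀ y ∈ X, (∀ j : Fin ℓ, j < i → x j = y j) → x i < y i → f x i < f y i)

/-- A morphism of forts: surjective, precellular, maps integer cells into integer cells, and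
is continuous on each integer cell. -/
def Morphism {ℓ : ℕ} (F G : Set (Fin ℓ → ℝ)) (φ : (Fin ℓ → ℝ) → (Fin ℓ → ℝ)) : Prop :=
  φ '' F = G ∧ Precellular F φ ∧
    ∀ C ∈ cellsOf F, (∃ C₂ ∈ cellsOf G, φ '' C ⊆ C₂) ∧ ContinuousOn φ C

/-- Two morphisms are combinatorially equivalent if they map each integer cell of the source
into the same integer cell of the target. -/
def CombEquiv {ℓ : ℕ} (F G : Set (Fin ℓ → ℝ)) (φ ψ : (Fin ℓ → ℝ) → (Fin ℓ → ℝ)) : Prop :=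
  ∀ C ∈ cellsOf F, ∃ C₂ ∈ cellsOf G, φ '' C ⊆ C₂ ∧ ψ '' C ⊆ C₂

/-- Projection to the first `i` coordinates. -/
def proj {ℓ : ℕ} (i : ℕ) (h : i ≤ ℓ) (x : Fin ℓ → ℝ) : Fin i → ℝ :=
  fun j => x (Fin.castLE h j)

/-- The last `ℓ - i` coordinates. -/
def tailpart {ℓ i : ℕ} (h : i ≤ ℓ) (x : Fin ℓ → ℝ) : Fin (ℓ - i) → ℝ :=
  fun j => x ⟨i + (j : ℕ), by have := j.2; omega⟩

/-- Glue a prefix of length `i` with a suffix of length `ℓ - i`. -/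
def glue {ℓ i : ℕ} (h : i ≤ ℓ) (x : Fin i → ℝ) (y : Fin (ℓ - i) → ℝ) : Fin ℓ → ℝ :=
  fun j => if hj : (j : ℕ) < i then x ⟨(j : ℕ), hj⟩
    else y ⟨(j : ℕ) - i, by have := j.2; omega⟩

/-- The fiber `X_x = {y : (x, y) ∈ X}` of `X ⊆ ℝ^ℓ` over `x ∈ ℝ^i`. -/
def fiber {ℓ i : ℕ} (h : i ≤ ℓ) (X : Set (Fin ℓ → ℝ)) (x : Fin i → ℝ) :
    Set (Fin (ℓ - i) → ℝ) :=
  {y | glue h x y ∈ X}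

end Forts

/-!
Induction along the construction of `F`. Forts are unions of integer cells, and since `φ` maps cells
into cells, so is `F ∩ φ⁻¹ G'`.

In length one, `F = (0, m)`, `G = (0, n)`, `G' = (0, n')` and the preimage is
`{a ∈ (0, m) | φ a < n'}`. It is an initial segment of `(0, m)` because `φ` is increasing with values in `(0, n)`; it has no
largest element because every value in `(0, n')` is attained; being a union of cells, it is `(0, N)`
for an integer `N`.

In length `ℓ + 1`, write `F = F₁ ⋉ s`, `G = G₁ ⋉ t`, `G' = G₁' ⋉ t'`. The first coordinate of `φ`
is again a surjective precellular map `ψ : F₁ → G₁` sending cells into cells, and so is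
`y ↦ tail (φ (u, y)) : s C → t D` for a point `u` of a cell `C` of `F₁`, where `D` is the cell of
`ψ u`. The preimage is `F₁' ⋉ s'`, where `F₁' = F₁ ∩ ψ⁻¹ G₁'` is a fort by the length-one case and
each `s' C = s C ∩ (tail ∘ φ (u, ·))⁻¹ t' D` is a fort by induction; saturation makes the choice of
`u` irrelevant.
-/

namespace Forts

section Cells

variable {ℓ : ℕ}

lemma Cell1.nonempty {A : Set ℝ} (h : Cell1 A) : A.Nonempty := by
  obtain ⟨k, rfl | rfl⟩ := h
  · exact singleton_nonempty _
  · exact nonempty_Ioo.2 (by linarith)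

noncomputable def unitCell (a : ℝ) : Set ℝ :=
  if a = ⌊a⌋ then {a} else Ioo (⌊a⌋ : ℝ) (⌊a⌋ + 1)

lemma Cell1.eq_unitCell {A : Set ℝ} (hA : Cell1 A) {a : ℝ} (ha : a ∈ A) : A = unitCell a := by
  obtain ⟨k, rfl | rfl⟩ := hA
  · rw [mem_singleton_iff.1 ha, unitCell, Int.floor_intCast, if_pos rfl]
  · have hk : ⌊a⌋ = k := Int.floor_eq_iff.2 ⟨ha.1.le, ha.2⟩
    have hne : a ≠ ⌊a⌋ := by rw [hk]; exact ha.1.ne'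
    rw [unitCell, if_neg hne, hk]

lemma cell1_unitCell (a : ℝ) : Cell1 (unitCell a) := by
  refine ⟨⌊a⌋, ?_⟩
  unfold unitCell
  split_ifs with h
  · exact Or.inl (by rw [← h])
  · exact Or.inr rfl

lemma mem_unitCell (a : ℝ) : a ∈ unitCell a := by
  unfold unitCell
  split_ifs with h
  · rfl
  · exact ⟨lt_of_le_of_ne (Int.floor_le a) (Ne.symm h), Int.lt_floor_add_one a⟩

lemma Cell1.eq_of_mem {A B : Set ℝ} (hA : Cell1 A) (hB : Cell1 B) {a : ℝ}
    (haA : a ∈ A) (haB : a ∈ B) : A = B :=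
  (hA.eq_unitCell haA).trans (hB.eq_unitCell haB).symm

lemma Cell1.subset_Ioo {A : Set ℝ} (hA : Cell1 A) {n : ℤ} {a : ℝ} (haA : a ∈ A)
    (ha : a ∈ Ioo (0 : ℝ) n) : A ⊆ Ioo (0 : ℝ) n := by
  obtain ⟨k, rfl | rfl⟩ := hA
  · rwa [singleton_subset_iff, ← mem_singleton_iff.1 haA]
  · have h0 : (0 : ℤ) ≤ k := by
      have : (0 : ℝ) < k + 1 := ha.1.trans haA.2
      exact Int.lt_add_one_iff.1 (by exact_mod_cast this)
    have hn : k + 1 ≤ n := by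
      have : (k : ℝ) < n := haA.1.trans ha.2
      exact Int.add_one_le_iff.2 (by exact_mod_cast this)
    exact Ioo_subset_Ioo (by exact_mod_cast h0) (by exact_mod_cast hn)

lemma Cell.nonempty {C : Set (Fin ℓ → ℝ)} (h : Cell C) : C.Nonempty := by
  obtain ⟨c, hc, rfl⟩ := h
  choose x hx using fun i => (hc i).nonempty
  exact ⟨x, hx⟩

lemma Cell.eq_of_mem {C C' : Set (Fin ℓ → ℝ)} (hC : Cell C) (hC' : Cell C')
    {x : Fin ℓ → ℝ} (hxC : x ∈ C) (hxC' : x ∈ C') : C = C' := by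
  obtain ⟨c, hc, rfl⟩ := hC
  obtain ⟨c', hc', rfl⟩ := hC'
  rw [funext fun i => (hc i).eq_of_mem (hc' i) (hxC i) (hxC' i)]

lemma exists_cell_mem (x : Fin ℓ → ℝ) : ∃ C, Cell C ∧ x ∈ C :=
  ⟨_, ⟨fun i => unitCell (x i), fun _ => cell1_unitCell _, rfl⟩, fun _ => mem_unitCell _⟩

lemma const_apply_zero (u : Fin 1 → ℝ) : (fun _ : Fin 1 => u 0) = u :=
  funext fun i => by rw [Subsingleton.elim i 0]

lemma cell_fin_one {A : Set ℝ} (hA : Cell1 A) : Cell {u : Fin 1 → ℝ | u 0 ∈ A} :=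
  ⟨fun _ => A, fun _ => hA, ext fun _ => ⟨fun h i => Subsingleton.elim 0 i ▸ h, fun h => h 0⟩⟩

lemma Cell.cons {A : Set (Fin 1 → ℝ)} {B : Set (Fin ℓ → ℝ)} (hA : Cell A) (hB : Cell B) :
    Cell {x : Fin (ℓ + 1) → ℝ | (fun _ : Fin 1 => x 0) ∈ A ∧ Fin.tail x ∈ B} := by
  obtain ⟨a, ha, rfl⟩ := hA
  obtain ⟨b, hb, rfl⟩ := hB
  refine ⟨Fin.cons (a 0) b, Fin.cases (ha 0) hb, ext fun x => ?_⟩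
  simp [Fin.forall_fin_succ, Fin.tail]

lemma cons_mem_prod_iff {A : Set (Fin 1 → ℝ)} {B : Set (Fin ℓ → ℝ)} {u : Fin 1 → ℝ}
    {y : Fin ℓ → ℝ} :
    (Fin.cons (u 0) y : Fin (ℓ + 1) → ℝ) ∈
      {x : Fin (ℓ + 1) → ℝ | (fun _ : Fin 1 => x 0) ∈ A ∧ Fin.tail x ∈ B} ↔ u ∈ A ∧ y ∈ B := by
  simp only [mem_ofPred_eq, Fin.cons_zero, const_apply_zero, Fin.tail_cons]

lemma Cell.exists_head {C : Set (Fin (ℓ + 1) → ℝ)} (hC : Cell C) :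
    ∃ A, Cell A ∧ ∀ x ∈ C, (fun _ : Fin 1 => x 0) ∈ A := by
  obtain ⟨c, hc, rfl⟩ := hC
  exact ⟨_, cell_fin_one (hc 0), fun x hx => hx 0⟩

lemma Cell.exists_tail {C : Set (Fin (ℓ + 1) → ℝ)} (hC : Cell C) :
    ∃ B, Cell B ∧ ∀ x ∈ C, Fin.tail x ∈ B := by
  obtain ⟨c, hc, rfl⟩ := hC
  exact ⟨_, ⟨fun i => c i.succ, fun i => hc i.succ, rfl⟩, fun x hx i => hx i.succ⟩

end Cells

section Saturated

variable {ℓ : ℕ}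

def Saturated (X : Set (Fin ℓ → ℝ)) : Prop :=
  ∀ C, Cell C → ∀ x ∈ C, x ∈ X → C ⊆ X

lemma Saturated.mem_iff_of_mem_cell {X C : Set (Fin ℓ → ℝ)} (hX : Saturated X) (hC : Cell C)
    {x y : Fin ℓ → ℝ} (hx : x ∈ C) (hy : y ∈ C) : x ∈ X ↔ y ∈ X :=
  ⟨fun h => hX C hC x hx h hy, fun h => hX C hC y hy h hx⟩

lemma Saturated.mem_iff_cons_mem {X : Set (Fin (ℓ + 1) → ℝ)} (hX : Saturated X)
    {A : Set (Fin 1 → ℝ)} (hA : Cell A) {x : Fin (ℓ + 1) → ℝ} {u : Fin 1 → ℝ}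
    (hx : (fun _ : Fin 1 => x 0) ∈ A) (hu : u ∈ A) :
    x ∈ X ↔ (Fin.cons (u 0) (Fin.tail x) : Fin (ℓ + 1) → ℝ) ∈ X := by
  obtain ⟨B, hB, hxB⟩ := exists_cell_mem (Fin.tail x)
  exact hX.mem_iff_of_mem_cell (hA.cons hB) ⟨hx, hxB⟩ (cons_mem_prod_iff.2 ⟨hu, hxB⟩)

end Saturated

section FortBasic

variable {ℓ : ℕ}

lemma Fort.pos {F : Set (Fin ℓ → ℝ)} (h : Fort ℓ F) : 0 < ℓ := by
  cases h <;> omega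

def stepSet (F1 : Set (Fin 1 → ℝ)) (s : Set (Fin 1 → ℝ) → Set (Fin ℓ → ℝ)) :
    Set (Fin (ℓ + 1) → ℝ) :=
  {x | ∃ C ∈ cellsOf F1, (fun _ : Fin 1 => x 0) ∈ C ∧ Fin.tail x ∈ s C}

variable {F1 : Set (Fin 1 → ℝ)} {s : Set (Fin 1 → ℝ) → Set (Fin ℓ → ℝ)}

lemma mem_stepSet_iff {C : Set (Fin 1 → ℝ)} (hC : C ∈ cellsOf F1) {x : Fin (ℓ + 1) → ℝ}
    (hx : (fun _ : Fin 1 => x 0) ∈ C) : x ∈ stepSet F1 s ↔ Fin.tail x ∈ s C :=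
  ⟨fun ⟨_, hC', hxC', hxs⟩ => hC'.1.eq_of_mem hC.1 hxC' hx ▸ hxs, fun hxs => ⟨C, hC, hx, hxs⟩⟩

lemma cons_mem_stepSet_iff {C : Set (Fin 1 → ℝ)} (hC : C ∈ cellsOf F1) {u : Fin 1 → ℝ}
    (hu : u ∈ C) {y : Fin ℓ → ℝ} :
    (Fin.cons (u 0) y : Fin (ℓ + 1) → ℝ) ∈ stepSet F1 s ↔ y ∈ s C := by
  rw [mem_stepSet_iff hC (by simpa only [Fin.cons_zero, const_apply_zero] using hu),
    Fin.tail_cons]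

lemma head_mem_of_mem_stepSet {x : Fin (ℓ + 1) → ℝ} (hx : x ∈ stepSet F1 s) :
    (fun _ : Fin 1 => x 0) ∈ F1 :=
  let ⟨_, hC, hxC, _⟩ := hx
  hC.2 hxC

lemma prod_mem_cellsOf_stepSet {C : Set (Fin 1 → ℝ)} (hC : C ∈ cellsOf F1)
    {C' : Set (Fin ℓ → ℝ)} (hC' : C' ∈ cellsOf (s C)) :
    {x : Fin (ℓ + 1) → ℝ | (fun _ : Fin 1 => x 0) ∈ C ∧ Fin.tail x ∈ C'} ∈
      cellsOf (stepSet F1 s) :=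
  ⟨hC.1.cons hC'.1, fun _ hx => ⟨C, hC, hx.1, hC'.2 hx.2⟩⟩

lemma Fort.exists_mem_cellsOf {F : Set (Fin ℓ → ℝ)} (h : Fort ℓ F) :
    ∀ x ∈ F, ∃ C ∈ cellsOf F, x ∈ C := by
  induction h with
  | base n _ =>
    intro x hx
    refine ⟨{y | y 0 ∈ unitCell (x 0)}, ⟨cell_fin_one (cell1_unitCell _), fun y hy => ?_⟩,
      mem_unitCell _⟩
    exact (cell1_unitCell _).subset_Ioo (n := n) (mem_unitCell _) (by exact_mod_cast hx)
      (by exact_mod_cast hy)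
  | step F1 s _ _ _ ihs =>
    rintro x ⟨C, hC, hxC, hxs⟩
    obtain ⟨C', hC', hxC'⟩ := ihs C hC _ hxs
    exact ⟨_, prod_mem_cellsOf_stepSet hC hC', hxC, hxC'⟩

lemma Fort.saturated {F : Set (Fin ℓ → ℝ)} (h : Fort ℓ F) : Saturated F := by
  intro C hC x hxC hxF
  obtain ⟨C', hC', hxC'⟩ := h.exists_mem_cellsOf x hxF
  exact hC.eq_of_mem hC'.1 hxC hxC' ▸ hC'.2

lemma Fort.nonempty {F : Set (Fin ℓ → ℝ)} (h : Fort ℓ F) : F.Nonempty := by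
  induction h with
  | base n hn =>
    have : (1 : ℝ) ≤ n := by exact_mod_cast hn
    exact ⟨fun _ => 1 / 2, by norm_num, by linarith⟩
  | step F1 s hF1 _ ih1 ihs =>
    obtain ⟨u, hu⟩ := ih1
    obtain ⟨C, hC, huC⟩ := hF1.exists_mem_cellsOf u hu
    obtain ⟨y, hy⟩ := ihs C hC
    exact ⟨_, (cons_mem_stepSet_iff hC huC).2 hy⟩

lemma exists_mem_stepSet_head_eq (hF1 : Fort 1 F1) (hs : ∀ C ∈ cellsOf F1, Fort ℓ (s C))
    {u : Fin 1 → ℝ} (hu : u ∈ F1) : ∃ x ∈ stepSet F1 s, (fun _ : Fin 1 => x 0) = u := by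
  obtain ⟨C, hC, huC⟩ := hF1.exists_mem_cellsOf u hu
  obtain ⟨y, hy⟩ := (hs C hC).nonempty
  exact ⟨_, (cons_mem_stepSet_iff hC huC).2 hy, by rw [Fin.cons_zero, const_apply_zero]⟩

lemma fort_one_eq {F : Set (Fin 1 → ℝ)} (h : Fort 1 F) :
    ∃ n : ℕ, 0 < n ∧ F = {x | x 0 ∈ Ioo (0 : ℝ) n} := by
  cases h with
  | base n hn => exact ⟨n, hn, rfl⟩
  | step F1 s hF1 hs =>
    obtain ⟨u, hu⟩ := hF1.nonempty
    obtain ⟨C, hC, _⟩ := hF1.exists_mem_cellsOf u hu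
    exact absurd (hs C hC).pos (lt_irrefl 0)

lemma Fort.eq_stepSet (hℓ : 0 < ℓ) {G : Set (Fin (ℓ + 1) → ℝ)} (h : Fort (ℓ + 1) G) :
    ∃ G1 t, Fort 1 G1 ∧ (∀ D ∈ cellsOf G1, Fort ℓ (t D)) ∧ G = stepSet G1 t := by
  cases h with
  | base => exact absurd hℓ (lt_irrefl 0)
  | step G1 t hG1 ht => exact ⟨G1, t, hG1, ht, rfl⟩

lemma stepSet_subset_stepSet {G1 G1' : Set (Fin 1 → ℝ)}
    {t t' : Set (Fin 1 → ℝ) → Set (Fin ℓ → ℝ)} (hG1' : Fort 1 G1')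
    (ht' : ∀ D ∈ cellsOf G1', Fort ℓ (t' D)) (h : stepSet G1' t' ⊆ stepSet G1 t) :
    G1' ⊆ G1 ∧ ∀ D ∈ cellsOf G1', t' D ⊆ t D := by
  have hG1 : G1' ⊆ G1 := fun v hv => by
    obtain ⟨g, hg, rfl⟩ := exists_mem_stepSet_head_eq hG1' ht' hv
    exact head_mem_of_mem_stepSet (h hg)
  refine ⟨hG1, fun D hD z hz => ?_⟩
  obtain ⟨v, hv⟩ := hD.1.nonempty
  have hg := h ((cons_mem_stepSet_iff hD hv).2 hz)
  exact (cons_mem_stepSet_iff ⟨hD.1, hD.2.trans hG1⟩ hv).1 hg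

lemma Saturated.eq_stepSet {X : Set (Fin (ℓ + 1) → ℝ)} (hX : Saturated X)
    (hXF : X ⊆ stepSet F1 s) {F1' : Set (Fin 1 → ℝ)} (hF1' : Saturated F1')
    (hXF1' : ∀ x ∈ X, (fun _ : Fin 1 => x 0) ∈ F1') {u : Set (Fin 1 → ℝ) → Fin 1 → ℝ}
    (hu : ∀ C ∈ cellsOf F1', u C ∈ C) :
    X = stepSet F1' fun C => {y ∈ s C | (Fin.cons (u C 0) y : Fin (ℓ + 1) → ℝ) ∈ X} := by
  ext x
  constructor
  · intro hx
    obtain ⟨C, hC, hxC, hxs⟩ := hXF hx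
    have hCF1' : C ∈ cellsOf F1' := ⟨hC.1, hF1' C hC.1 _ hxC (hXF1' x hx)⟩
    exact ⟨C, hCF1', hxC, hxs, (hX.mem_iff_cons_mem hC.1 hxC (hu C hCF1')).1 hx⟩
  · rintro ⟨C, hC, hxC, -, hx⟩
    exact (hX.mem_iff_cons_mem hC.1 hxC (hu C hC)).2 hx

end FortBasic

section CellMap

variable {ℓ : ℕ}

structure CellMap (F G : Set (Fin ℓ → ℝ)) (φ : (Fin ℓ → ℝ) → (Fin ℓ → ℝ)) : Prop where
  image_eq : φ '' F = G
  precellular : Precellular F φ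
  exists_cell : ∀ C ∈ cellsOf F, ∃ C₂, Cell C₂ ∧ φ '' C ⊆ C₂

variable {F G G' : Set (Fin ℓ → ℝ)} {φ : (Fin ℓ → ℝ) → (Fin ℓ → ℝ)}

lemma Morphism.cellMap (h : Morphism F G φ) : CellMap F G φ where
  image_eq := h.1
  precellular := h.2.1
  exists_cell C hC :=
    let ⟨C₂, hC₂, hsub⟩ := (h.2.2 C hC).1
    ⟨C₂, hC₂.1, hsub⟩

lemma CellMap.saturated_inter_preimage (hφ : CellMap F G φ) (hF : Saturated F)
    (hG' : Saturated G') : Saturated (F ∩ φ ⁻¹' G') := by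
  rintro C hC x hxC ⟨hxF, hxG'⟩
  have hCF : C ⊆ F := hF C hC x hxC hxF
  obtain ⟨C₂, hC₂, hsub⟩ := hφ.exists_cell C ⟨hC, hCF⟩
  have hC₂G' : C₂ ⊆ G' := hG' C₂ hC₂ _ (hsub (mem_image_of_mem φ hxC)) hxG'
  exact fun y hy => ⟨hCF hy, hC₂G' (hsub (mem_image_of_mem φ hy))⟩

lemma Precellular.mono {X Y : Set (Fin ℓ → ℝ)} (h : Precellular Y φ) (hXY : X ⊆ Y) :
    Precellular X φ :=
  ⟨fun i _ hx _ hy => h.1 i _ (hXY hx) _ (hXY hy), fun i _ hx _ hy => h.2 i _ (hXY hx) _ (hXY hy)⟩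

lemma Morphism.restrict (hφ : Morphism F G φ) (hG' : Fort ℓ G') (hsub : G' ⊆ G) :
    Morphism (F ∩ φ ⁻¹' G') G' φ := by
  refine ⟨?_, hφ.2.1.mono inter_subset_left, fun C hC => ?_⟩
  · rw [image_inter_preimage, hφ.1, inter_eq_right.2 hsub]
  · obtain ⟨⟨C₂, hC₂, hsub₂⟩, hcont⟩ := hφ.2.2 C ⟨hC.1, hC.2.trans inter_subset_left⟩
    obtain ⟨x, hx⟩ := hC.1.nonempty
    have hC₂G' : C₂ ⊆ G' :=
      hG'.saturated C₂ hC₂.1 _ (hsub₂ (mem_image_of_mem φ hx)) (hC.2 hx).2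
    exact ⟨⟨C₂, ⟨hC₂.1, hC₂G'⟩, hsub₂⟩, hcont⟩

end CellMap

section Precellular

variable {ℓ : ℕ} {X : Set (Fin (ℓ + 1) → ℝ)} {φ : (Fin (ℓ + 1) → ℝ) → (Fin (ℓ + 1) → ℝ)}
  {x y : Fin (ℓ + 1) → ℝ}

lemma Precellular.apply_zero_eq (h : Precellular X φ) (hx : x ∈ X) (hy : y ∈ X)
    (hxy : x 0 = y 0) : φ x 0 = φ y 0 :=
  h.1 0 x hx y hy fun j hj => le_antisymm hj (Fin.zero_le j) ▸ hxy

lemma Precellular.apply_zero_lt (h : Precellular X φ) (hx : x ∈ X) (hy : y ∈ X)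
    (hxy : x 0 < y 0) : φ x 0 < φ y 0 :=
  h.2 0 x hx y hy (fun j hj => absurd hj (Fin.not_lt_zero j)) hxy

lemma Precellular.lt_of_apply_zero_lt (h : Precellular X φ) (hx : x ∈ X) (hy : y ∈ X)
    (hxy : φ x 0 < φ y 0) : x 0 < y 0 := by
  by_contra! hyx
  rcases hyx.lt_or_eq with hlt | heq
  · exact (h.apply_zero_lt hy hx hlt).not_gt hxy
  · exact hxy.ne (h.apply_zero_eq hx hy heq.symm)

lemma Precellular.eq_of_apply_zero_eq (h : Precellular X φ) (hx : x ∈ X) (hy : y ∈ X)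
    (hxy : φ x 0 = φ y 0) : x 0 = y 0 := by
  rcases lt_trichotomy (x 0) (y 0) with hlt | heq | hgt
  · exact absurd hxy (h.apply_zero_lt hx hy hlt).ne
  · exact heq
  · exact absurd hxy (h.apply_zero_lt hy hx hgt).ne'

end Precellular

lemma exists_nat_eq_Ioo_of_saturated {Q : Set ℝ} (hne : Q.Nonempty) (hpos : ∀ a ∈ Q, 0 < a)
    (hbdd : BddAbove Q) (hdown : ∀ a ∈ Q, ∀ b, 0 < b → b ≤ a → b ∈ Q)
    (hmax : ∀ a ∈ Q, ∃ b ∈ Q, a < b) (hsat : ∀ A, Cell1 A → ∀ a ∈ A, a ∈ Q → A ⊆ Q) :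
    ∃ n : ℕ, 0 < n ∧ Q = Ioo (0 : ℝ) n := by
  set r := sSup Q
  have hQ : Q = Ioo 0 r := by
    ext a
    constructor
    · intro ha
      obtain ⟨b, hb, hab⟩ := hmax a ha
      exact ⟨hpos a ha, hab.trans_le (le_csSup hbdd hb)⟩
    · rintro ⟨ha0, har⟩
      obtain ⟨b, hb, hab⟩ := exists_lt_of_lt_csSup hne har
      exact hdown b hb a ha0 hab.le
  have hr : 0 < r := by
    obtain ⟨a, ha⟩ := hne
    rw [hQ] at ha
    exact ha.1.trans ha.2
  set n := ⌊r⌋₊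
  have hrn : r = n := by
    by_contra hrn
    have hlt : (n : ℝ) < r := (Nat.floor_le hr.le).lt_of_ne (Ne.symm hrn)
    have hr1 : r < n + 1 := Nat.lt_floor_add_one r
    obtain ⟨a, hna, har⟩ := exists_between hlt
    have hA : Cell1 (Ioo (n : ℝ) (n + 1)) := ⟨n, Or.inr (by push_cast; rfl)⟩
    have haQ : a ∈ Q := hQ ▸ ⟨(Nat.cast_nonneg n).trans_lt hna, har⟩
    -- the cell `(n, n + 1)` meets `Q` but reaches beyond `sSup Q`
    have hmid := hsat _ hA a ⟨hna, har.trans hr1⟩ haQ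
      (show (r + n + 1) / 2 ∈ Ioo (n : ℝ) (n + 1) from ⟨by linarith, by linarith⟩)
    rw [hQ] at hmid
    linarith [hmid.2]
  exact ⟨n, by exact_mod_cast hrn ▸ hr, hrn ▸ hQ⟩

lemma fort_one_inter_preimage {F G G' : Set (Fin 1 → ℝ)} {φ : (Fin 1 → ℝ) → (Fin 1 → ℝ)}
    (hF : Fort 1 F) (hG : Fort 1 G) (hφ : CellMap F G φ) (hG' : Fort 1 G') (hsub : G' ⊆ G) :
    Fort 1 (F ∩ φ ⁻¹' G') := by
  have hsat := hφ.saturated_inter_preimage hF.saturated hG'.saturated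
  obtain ⟨g, hg⟩ := hG'.nonempty
  obtain ⟨m, -, rfl⟩ := fort_one_eq hF
  obtain ⟨n, -, rfl⟩ := fort_one_eq hG
  obtain ⟨n', -, rfl⟩ := fort_one_eq hG'
  set Q := {a : ℝ | a ∈ Ioo (0 : ℝ) m ∧ φ (fun _ => a) 0 ∈ Ioo (0 : ℝ) n'}
  rw [← hφ.image_eq] at hsub
  obtain ⟨N, hN, hQ⟩ : ∃ N : ℕ, 0 < N ∧ Q = Ioo (0 : ℝ) N := by
    refine exists_nat_eq_Ioo_of_saturated ?ne (fun a ha => ha.1.1) ⟨m, fun a ha => ha.1.2.le⟩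
      ?down ?max ?sat
    case ne =>
      obtain ⟨x, hx, rfl⟩ := hsub hg
      refine ⟨x 0, hx, ?_⟩
      rwa [const_apply_zero]
    case down =>
      intro a ha b hb hba
      have hbF : b ∈ Ioo (0 : ℝ) m := ⟨hb, hba.trans_lt ha.1.2⟩
      have hφb : φ (fun _ => b) 0 ∈ Ioo (0 : ℝ) n :=
        hφ.image_eq.subset (mem_image_of_mem φ (x := fun _ => b) hbF)
      have hle : φ (fun _ => b) 0 ≤ φ (fun _ => a) 0 := by
        rcases hba.lt_or_eq with hlt | rfl
        · exact (hφ.precellular.apply_zero_lt hbF ha.1 hlt).le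
        · exact le_rfl
      exact ⟨hbF, hφb.1, hle.trans_lt ha.2.2⟩
    case max =>
      intro a ha
      obtain ⟨v, hv, hvn⟩ := exists_between ha.2.2
      obtain ⟨x, hx, hφx⟩ := hsub
        (show (fun _ : Fin 1 => v) ∈ {x | x 0 ∈ Ioo (0 : ℝ) n'} from ⟨ha.2.1.trans hv, hvn⟩)
      have hφx0 : φ x 0 = v := congrFun hφx 0
      refine ⟨x 0, ⟨hx, ?_⟩, hφ.precellular.lt_of_apply_zero_lt ha.1 hx (hφx0 ▸ hv)⟩
      rw [const_apply_zero, hφx0]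
      exact ⟨ha.2.1.trans hv, hvn⟩
    case sat =>
      intro A hA a haA haQ b hbA
      exact hsat _ (cell_fin_one hA) (fun _ => a) haA haQ
        (show (fun _ : Fin 1 => b) ∈ _ from hbA)
  convert Fort.base N hN using 1
  ext x
  rw [mem_ofPred_eq, ← hQ]
  simp only [Q, mem_inter_iff, mem_preimage, mem_ofPred_eq, const_apply_zero]

section HeadAndFibers

variable {ℓ : ℕ}

-- Well defined on the projection of `F`, since `φ x 0` depends only on `x 0`.
open Classical in
noncomputable def headMap (F : Set (Fin (ℓ + 1) → ℝ)) (φ : (Fin (ℓ + 1) → ℝ) → (Fin (ℓ + 1) → ℝ))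
    (u : Fin 1 → ℝ) : Fin 1 → ℝ :=
  if h : ∃ x ∈ F, x 0 = u 0 then fun _ => φ h.choose 0 else u

lemma headMap_eq {F : Set (Fin (ℓ + 1) → ℝ)} {φ : (Fin (ℓ + 1) → ℝ) → (Fin (ℓ + 1) → ℝ)}
    (hφ : Precellular F φ) {x : Fin (ℓ + 1) → ℝ} (hx : x ∈ F) {u : Fin 1 → ℝ}
    (hxu : x 0 = u 0) : headMap F φ u = fun _ => φ x 0 := by
  have h : ∃ x ∈ F, x 0 = u 0 := ⟨x, hx, hxu⟩
  rw [headMap, dif_pos h, hφ.apply_zero_eq h.choose_spec.1 hx (h.choose_spec.2.trans hxu.symm)]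

variable {F1 G1 : Set (Fin 1 → ℝ)} {s t : Set (Fin 1 → ℝ) → Set (Fin ℓ → ℝ)}
  {φ : (Fin (ℓ + 1) → ℝ) → (Fin (ℓ + 1) → ℝ)}

lemma CellMap.cellMap_headMap (hφ : CellMap (stepSet F1 s) (stepSet G1 t) φ) (hF1 : Fort 1 F1)
    (hs : ∀ C ∈ cellsOf F1, Fort ℓ (s C)) (hG1 : Fort 1 G1)
    (ht : ∀ D ∈ cellsOf G1, Fort ℓ (t D)) : CellMap F1 G1 (headMap (stepSet F1 s) φ) := by
  have hψ : ∀ x ∈ stepSet F1 s, headMap (stepSet F1 s) φ (fun _ => x 0) = fun _ => φ x 0 :=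
    fun x hx => headMap_eq hφ.precellular hx rfl
  refine ⟨?_, ⟨fun i u _ v _ huv => ?_, fun i u hu v hv _ huv => ?_⟩, fun C hC => ?_⟩
  · ext v
    constructor
    · rintro ⟨u, hu, rfl⟩
      obtain ⟨x, hx, rfl⟩ := exists_mem_stepSet_head_eq hF1 hs hu
      rw [hψ x hx]
      exact head_mem_of_mem_stepSet (hφ.image_eq.subset (mem_image_of_mem φ hx))
    · intro hv
      obtain ⟨g, hg, rfl⟩ := exists_mem_stepSet_head_eq hG1 ht hv
      obtain ⟨x, hx, rfl⟩ := hφ.image_eq.symm.subset hg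
      exact ⟨_, head_mem_of_mem_stepSet hx, hψ x hx⟩
  · have huv : u = v := funext fun j => by rw [Subsingleton.elim j i]; exact huv i le_rfl
    rw [huv]
  · obtain ⟨x, hx, rfl⟩ := exists_mem_stepSet_head_eq hF1 hs hu
    obtain ⟨y, hy, rfl⟩ := exists_mem_stepSet_head_eq hF1 hs hv
    rw [hψ x hx, hψ y hy]
    exact hφ.precellular.apply_zero_lt hx hy huv
  · obtain ⟨y, hy⟩ := (hs C hC).nonempty
    obtain ⟨E, hE, hyE⟩ := (hs C hC).exists_mem_cellsOf y hy
    have hP := prod_mem_cellsOf_stepSet hC hE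
    obtain ⟨C₂, hC₂, hsub⟩ := hφ.exists_cell _ hP
    obtain ⟨A, hA, hC₂A⟩ := hC₂.exists_head
    refine ⟨A, hA, ?_⟩
    rintro _ ⟨u, hu, rfl⟩
    have hxP := cons_mem_prod_iff.2 ⟨hu, hyE⟩
    rw [headMap_eq hφ.precellular (hP.2 hxP) (Fin.cons_zero _ _)]
    exact hC₂A _ (hsub (mem_image_of_mem φ hxP))

def fiberMap (φ : (Fin (ℓ + 1) → ℝ) → (Fin (ℓ + 1) → ℝ)) (u : Fin 1 → ℝ) (y : Fin ℓ → ℝ) :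
    Fin ℓ → ℝ :=
  Fin.tail (φ (Fin.cons (u 0) y))

lemma CellMap.cellMap_fiberMap (hφ : CellMap (stepSet F1 s) (stepSet G1 t) φ)
    {C : Set (Fin 1 → ℝ)} (hC : C ∈ cellsOf F1) (hsC : (s C).Nonempty) {u : Fin 1 → ℝ}
    (hu : u ∈ C) {D : Set (Fin 1 → ℝ)} (hD : D ∈ cellsOf G1)
    (huD : headMap (stepSet F1 s) φ u ∈ D) : CellMap (s C) (t D) (fiberMap φ u) := by
  have hxF : ∀ y ∈ s C, (Fin.cons (u 0) y : Fin (ℓ + 1) → ℝ) ∈ stepSet F1 s :=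
    fun y hy => (cons_mem_stepSet_iff hC hu).2 hy
  have hψ : ∀ y ∈ s C, headMap (stepSet F1 s) φ u = fun _ => φ (Fin.cons (u 0) y) 0 :=
    fun y hy => headMap_eq hφ.precellular (hxF y hy) (Fin.cons_zero _ _)
  obtain ⟨y₀, hy₀⟩ := hsC
  refine ⟨?_, ⟨fun i y hy y' hy' h => ?_, fun i y hy y' hy' h hlt => ?_⟩, fun C' hC' => ?_⟩
  · ext z
    constructor
    · rintro ⟨y, hy, rfl⟩
      have hφy := hφ.image_eq.subset (mem_image_of_mem φ (hxF y hy))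
      exact (mem_stepSet_iff hD (hψ y hy ▸ huD)).1 hφy
    · intro hz
      obtain ⟨x, hx, hφx⟩ := hφ.image_eq.symm.subset ((cons_mem_stepSet_iff hD huD).2 hz)
      have hx0 : x 0 = u 0 := by
        have := hφ.precellular.eq_of_apply_zero_eq hx (hxF y₀ hy₀)
          (by rw [hφx, Fin.cons_zero, hψ y₀ hy₀])
        rwa [Fin.cons_zero] at this
      refine ⟨Fin.tail x, (mem_stepSet_iff hC ?_).1 hx, ?_⟩
      · rwa [hx0, const_apply_zero]
      · rw [fiberMap, ← hx0, Fin.cons_self_tail, hφx, Fin.tail_cons]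
  · refine hφ.precellular.1 i.succ _ (hxF y hy) _ (hxF y' hy') fun j hj => ?_
    cases j using Fin.cases with
    | zero => rfl
    | succ k => simpa using h k (Fin.succ_le_succ_iff.1 hj)
  · refine hφ.precellular.2 i.succ _ (hxF y hy) _ (hxF y' hy') (fun j hj => ?_) hlt
    cases j using Fin.cases with
    | zero => rfl
    | succ k => simpa using h k (Fin.succ_lt_succ_iff.1 hj)
  · have hP := prod_mem_cellsOf_stepSet hC hC'
    obtain ⟨C₂, hC₂, hsub⟩ := hφ.exists_cell _ hP
    obtain ⟨B, hB, hC₂B⟩ := hC₂.exists_tail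
    refine ⟨B, hB, ?_⟩
    rintro _ ⟨y, hy, rfl⟩
    exact hC₂B _ (hsub (mem_image_of_mem φ (cons_mem_prod_iff.2 ⟨hu, hy⟩)))

end HeadAndFibers

section Preimage

variable {ℓ : ℕ}

lemma stepSet_inter_preimage {F1 : Set (Fin 1 → ℝ)} {s : Set (Fin 1 → ℝ) → Set (Fin ℓ → ℝ)}
    (hF1 : Fort 1 F1) (hs : ∀ C ∈ cellsOf F1, Fort ℓ (s C))
    (ih : ∀ C ∈ cellsOf F1, ∀ {G G' : Set (Fin ℓ → ℝ)} {φ : (Fin ℓ → ℝ) → (Fin ℓ → ℝ)},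
      Fort ℓ G → CellMap (s C) G φ → Fort ℓ G' → G' ⊆ G → Fort ℓ (s C ∩ φ ⁻¹' G'))
    {G G' : Set (Fin (ℓ + 1) → ℝ)} {φ : (Fin (ℓ + 1) → ℝ) → (Fin (ℓ + 1) → ℝ)}
    (hG : Fort (ℓ + 1) G) (hφ : CellMap (stepSet F1 s) G φ) (hG' : Fort (ℓ + 1) G')
    (hsub : G' ⊆ G) : Fort (ℓ + 1) (stepSet F1 s ∩ φ ⁻¹' G') := by
  have hℓ : 0 < ℓ := by
    obtain ⟨u, hu⟩ := hF1.nonempty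
    obtain ⟨C, hC, -⟩ := hF1.exists_mem_cellsOf u hu
    exact (hs C hC).pos
  have hsat := hφ.saturated_inter_preimage (Fort.step F1 s hF1 hs).saturated hG'.saturated
  obtain ⟨G1, t, hG1, ht, rfl⟩ := hG.eq_stepSet hℓ
  obtain ⟨G1', t', hG1', ht', rfl⟩ := hG'.eq_stepSet hℓ
  obtain ⟨hG1sub, htsub⟩ := stepSet_subset_stepSet hG1' ht' hsub
  set ψ := headMap (stepSet F1 s) φ
  have hψ : CellMap F1 G1 ψ := hφ.cellMap_headMap hF1 hs hG1 ht
  set F1' := F1 ∩ ψ ⁻¹' G1'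
  have hF1' : Fort 1 F1' := fort_one_inter_preimage hF1 hG1 hψ hG1' hG1sub
  have hXF1' : ∀ x ∈ stepSet F1 s ∩ φ ⁻¹' stepSet G1' t', (fun _ => x 0) ∈ F1' := by
    rintro x ⟨hxF, hxG'⟩
    have hψx : ψ (fun _ => x 0) = fun _ => φ x 0 := headMap_eq hφ.precellular hxF rfl
    refine ⟨head_mem_of_mem_stepSet hxF, ?_⟩
    rw [mem_preimage, hψx]
    exact head_mem_of_mem_stepSet hxG'
  choose! u hu using fun C (hC : C ∈ cellsOf F1') => hC.1.nonempty
  rw [hsat.eq_stepSet inter_subset_left hF1'.saturated hXF1' hu]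
  refine Fort.step _ _ hF1' fun C hC => ?_
  have hCF1 : C ∈ cellsOf F1 := ⟨hC.1, hC.2.trans inter_subset_left⟩
  obtain ⟨D, hD, hψD⟩ := hG1'.exists_mem_cellsOf (ψ (u C)) (hC.2 (hu C hC)).2
  have hDG1 : D ∈ cellsOf G1 := ⟨hD.1, hD.2.trans hG1sub⟩
  have hθ := hφ.cellMap_fiberMap hCF1 (hs C hCF1).nonempty (hu C hC) hDG1 hψD
  convert ih C hCF1 (ht D hDG1) hθ (ht' D hD) (htsub D hD) using 1
  ext y
  refine and_congr_right fun hy => ?_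
  have hxF := (cons_mem_stepSet_iff hCF1 (hu C hC)).2 hy
  have hψu : ψ (u C) = fun _ => φ (Fin.cons (u C 0) y) 0 :=
    headMap_eq hφ.precellular hxF (Fin.cons_zero _ _)
  rw [mem_inter_iff, and_iff_right hxF, mem_preimage, mem_stepSet_iff hD (hψu ▸ hψD)]
  rfl

theorem Fort.inter_preimage {F G G' : Set (Fin ℓ → ℝ)} {φ : (Fin ℓ → ℝ) → (Fin ℓ → ℝ)}
    (hF : Fort ℓ F) (hG : Fort ℓ G) (hφ : CellMap F G φ) (hG' : Fort ℓ G') (hsub : G' ⊆ G) :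
    Fort ℓ (F ∩ φ ⁻¹' G') := by
  induction hF with
  | base n hn => exact fort_one_inter_preimage (Fort.base n hn) hG hφ hG' hsub
  | step F1 s hF1 hs _ ih => exact stepSet_inter_preimage hF1 hs ih hG hφ hG' hsub

end Preimage

/-- The preimage of a subfort under a morphism is a fort, and the restriction of the
morphism to it is a morphism onto the subfort. -/
theorem preimage_fort {ℓ : ℕ} (F G : Set (Fin ℓ → ℝ)) (hF : Fort ℓ F) (hG : Fort ℓ G)
    (φ : (Fin ℓ → ℝ) → (Fin ℓ → ℝ)) (hφ : Morphism F G φ)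
    (G' : Set (Fin ℓ → ℝ)) (hG' : Fort ℓ G') (hsub : G' ⊆ G) :
    Fort ℓ (F ∩ φ ⁻¹' G') ∧ Morphism (F ∩ φ ⁻¹' G') G' φ :=
  ⟨hF.inter_preimage hG hφ.cellMap hG' hsub, hφ.restrict hG' hsub⟩

end Forts
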